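/- arXiv:0812.2143 — 4 statements merged into one kernel-verified Lean document; each statement's English description precedes it below -/
import Mathlib

section
/- For any choice of signs ε_a, ε_b, ε_c ∈ {+1,−1}, setting a₊=b₊=c₊=1/2 and a₋=ε_a/2, b₋=ε_b/2, c₋=ε_c/2, the 9×9 matrix R̂ (defined from these parameters as above) satisfies the constant braid equation R̂₁₂ R̂₂₃ R̂₁₂ = R̂₂₃ R̂₁₂ R̂₂₃, where R̂₁₂ = R̂ ⊗ I₃ and R̂₂₃ = I₃ ⊗ R̂ are 27×27 matrices. -/
open Matrix

/-- The 9×9 exotic braid matrix with parameters `a₊, a₋, b₊, b₋, c₊, c₋`. -/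
noncomputable def Rhat9 (ap am bp bm cp cm : ℝ) : Matrix (Fin 9) (Fin 9) ℝ :=
  !![ap,0,0,0,0,0,0,0,am;
     0,bp,0,0,0,0,0,bm,0;
     0,0,ap,0,0,0,am,0,0;
     0,0,0,cp,0,cm,0,0,0;
     0,0,0,0,1,0,0,0,0;
     0,0,0,cm,0,cp,0,0,0;
     0,0,am,0,0,0,ap,0,0;
     0,bm,0,0,0,0,0,bp,0;
     am,0,0,0,0,0,0,0,ap]

/-- Lexicographic identification of `Fin 3 × Fin 3` with `Fin 9`. -/
def enc (p : Fin 3 × Fin 3) : Fin 9 :=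
  ⟨3 * p.1.val + p.2.val, by have := p.1.isLt; have := p.2.isLt; omega⟩

/-- The braid matrix reindexed by pairs `(i,j)`, `i,j ∈ {1,2,3}`, ordered lexicographically. -/
noncomputable def RhatP (ap am bp bm cp cm : ℝ) :
    Matrix (Fin 3 × Fin 3) (Fin 3 × Fin 3) ℝ :=
  fun p q => Rhat9 ap am bp bm cp cm (enc p) (enc q)

/-- `R ⊗ I₃`, acting on the first two factors of `(ℝ³)⊗³ ≅ ℝ²⁷`. -/
def M12 (R : Matrix (Fin 3 × Fin 3) (Fin 3 × Fin 3) ℝ) :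
    Matrix (Fin 3 × Fin 3 × Fin 3) (Fin 3 × Fin 3 × Fin 3) ℝ :=
  fun x y => R (x.1, x.2.1) (y.1, y.2.1) * (if x.2.2 = y.2.2 then 1 else 0)

/-- `I₃ ⊗ R`, acting on the last two factors. -/
def M23 (R : Matrix (Fin 3 × Fin 3) (Fin 3 × Fin 3) ℝ) :
    Matrix (Fin 3 × Fin 3 × Fin 3) (Fin 3 × Fin 3 × Fin 3) ℝ :=
  fun x y => (if x.1 = y.1 then (1:ℝ) else 0) * R (x.2.1, x.2.2) (y.2.1, y.2.2)

/-!
With `a₊ = b₊ = c₊ = 1/2` and `a₋, b₋, c₋ = ±1/2`, one has `R̂ = (1 + Σ)/2`, where `Σ` is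
the signed permutation `e_i ⊗ e_j ↦ s(i,j) e_{i'} ⊗ e_{j'}` reversing both indices
(`i' = 4 - i`), and the sign `s(i,j)` only depends on which of `i, j` is the middle index `2`.
Hence `Σ² = 1`, so `R̂` is idempotent, and since reversal does not change the signs, `Σ ⊗ I`
and `I ⊗ Σ` commute. Thus `R̂₁₂` and `R̂₂₃` are commuting idempotents `P, Q`, and
`PQP = PQ = QPQ`.
-/

section SignedPerm

variable {n α : Type*} [DecidableEq n]

def signedPerm [Zero α] (σ : n → n) (s : n → α) : Matrix n n α :=
  of fun x y => if y = σ x then s x else 0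

variable [Fintype n]

theorem signedPerm_mul [NonUnitalNonAssocSemiring α] (σ τ : n → n) (s t : n → α) :
    signedPerm σ s * signedPerm τ t = signedPerm (τ ∘ σ) (fun x => s x * t (σ x)) := by
  ext x y
  simp only [signedPerm, mul_apply, of_apply, ite_mul, zero_mul]
  simp [Finset.sum_ite_eq']

theorem signedPerm_mul_self [NonAssocSemiring α] {σ : n → n} {s : n → α}
    (hσ : ∀ x, σ (σ x) = x) (hs : ∀ x, s x * s (σ x) = 1) :
    signedPerm σ s * signedPerm σ s = 1 := by
  rw [signedPerm_mul]
  ext x y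
  simp [signedPerm, hσ, hs, one_apply, eq_comm]

theorem signedPerm_commute [NonUnitalNonAssocSemiring α] {σ τ : n → n} {s t : n → α}
    (hστ : ∀ x, τ (σ x) = σ (τ x)) (hst : ∀ x, s x * t (σ x) = t x * s (τ x)) :
    Commute (signedPerm σ s) (signedPerm τ t) := by
  simp only [Commute, SemiconjBy, signedPerm_mul, Function.comp_def, hστ, hst]

end SignedPerm

theorem IsIdempotentElem.braid_of_commute {S : Type*} [Semigroup S] {p q : S}
    (hp : IsIdempotentElem p) (hq : IsIdempotentElem q) (h : Commute p q) :
    p * q * p = q * p * q := by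
  have hpqp : p * q * p = p * q := by rw [mul_assoc, ← h.eq, ← mul_assoc, hp.eq]
  have hqpq : q * p * q = p * q := by rw [mul_assoc, h.eq, ← mul_assoc, hq.eq]
  rw [hpqp, hqpq]

theorem isIdempotentElem_half_smul_one_add {K A : Type*} [Field K] [NeZero (2 : K)] [Ring A]
    [Algebra K A] {s : A} (hs : s * s = 1) : IsIdempotentElem ((2⁻¹ : K) • (1 + s)) := by
  have h : (1 + s) * (1 + s) = (2 : K) • (1 + s) := by
    rw [add_mul, mul_add, mul_add, hs, two_smul]; noncomm_ring
  rw [IsIdempotentElem, smul_mul_smul_comm, h, smul_smul, mul_assoc, inv_mul_cancel₀ two_ne_zero,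
    mul_one]

theorem half_smul_one_add_braid_of_commute {K A : Type*} [Field K] [NeZero (2 : K)] [Ring A]
    [Algebra K A] {s t : A} (hs : s * s = 1) (ht : t * t = 1) (hst : Commute s t) :
    (2⁻¹ : K) • (1 + s) * (2⁻¹ : K) • (1 + t) * (2⁻¹ : K) • (1 + s) =
      (2⁻¹ : K) • (1 + t) * (2⁻¹ : K) • (1 + s) * (2⁻¹ : K) • (1 + t) := by
  have h : Commute (1 + s) (1 + t) :=
    (Commute.one_left _).add_left ((Commute.one_right s).add_right hst)
  exact (isIdempotentElem_half_smul_one_add hs).braid_of_commute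
    (isIdempotentElem_half_smul_one_add ht) ((h.smul_left _).smul_right _)

theorem M12_signedPerm (σ : Fin 3 × Fin 3 → Fin 3 × Fin 3) (s : Fin 3 × Fin 3 → ℝ) :
    M12 (signedPerm σ s) = signedPerm
      (fun x => ((σ (x.1, x.2.1)).1, (σ (x.1, x.2.1)).2, x.2.2)) (fun x => s (x.1, x.2.1)) := by
  ext ⟨x₁, x₂, x₃⟩ ⟨y₁, y₂, y₃⟩
  simp only [M12, signedPerm, of_apply, Prod.ext_iff]
  split_ifs <;> simp_all

theorem M23_signedPerm (σ : Fin 3 × Fin 3 → Fin 3 × Fin 3) (s : Fin 3 × Fin 3 → ℝ) :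
    M23 (signedPerm σ s) = signedPerm
      (fun x => (x.1, (σ (x.2.1, x.2.2)).1, (σ (x.2.1, x.2.2)).2))
      (fun x => s (x.2.1, x.2.2)) := by
  ext ⟨x₁, x₂, x₃⟩ ⟨y₁, y₂, y₃⟩
  simp only [M23, signedPerm, of_apply, Prod.ext_iff]
  split_ifs <;> simp_all

theorem M12_smul_one_add (c : ℝ) (A : Matrix (Fin 3 × Fin 3) (Fin 3 × Fin 3) ℝ) :
    M12 (c • (1 + A)) = c • (1 + M12 A) := by
  ext ⟨x₁, x₂, x₃⟩ ⟨y₁, y₂, y₃⟩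
  simp only [M12, Matrix.smul_apply, Matrix.add_apply, one_apply, Prod.ext_iff, smul_eq_mul]
  split_ifs <;> simp_all

theorem M23_smul_one_add (c : ℝ) (A : Matrix (Fin 3 × Fin 3) (Fin 3 × Fin 3) ℝ) :
    M23 (c • (1 + A)) = c • (1 + M23 A) := by
  ext ⟨x₁, x₂, x₃⟩ ⟨y₁, y₂, y₃⟩
  simp only [M23, Matrix.smul_apply, Matrix.add_apply, one_apply, Prod.ext_iff, smul_eq_mul]
  split_ifs <;> simp_all

def signedReversal (s : Fin 3 → Fin 3 → ℝ) : Matrix (Fin 3 × Fin 3) (Fin 3 × Fin 3) ℝ :=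
  signedPerm (fun p => (p.1.rev, p.2.rev)) (fun p => s p.1 p.2)

section SignedReversal

variable {s : Fin 3 → Fin 3 → ℝ}

theorem M12_signedReversal_mul_self (hl : ∀ i j, s i.rev j = s i j)
    (hr : ∀ i j, s i j.rev = s i j) (hsq : ∀ i j, s i j * s i j = 1) :
    M12 (signedReversal s) * M12 (signedReversal s) = 1 := by
  rw [signedReversal, M12_signedPerm]
  exact signedPerm_mul_self (fun x => by simp) (fun x => by simp [hl, hr, hsq])

theorem M23_signedReversal_mul_self (hl : ∀ i j, s i.rev j = s i j)
    (hr : ∀ i j, s i j.rev = s i j) (hsq : ∀ i j, s i j * s i j = 1) :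
    M23 (signedReversal s) * M23 (signedReversal s) = 1 := by
  rw [signedReversal, M23_signedPerm]
  exact signedPerm_mul_self (fun x => by simp) (fun x => by simp [hl, hr, hsq])

theorem commute_M12_M23_signedReversal (hl : ∀ i j, s i.rev j = s i j)
    (hr : ∀ i j, s i j.rev = s i j) :
    Commute (M12 (signedReversal s)) (M23 (signedReversal s)) := by
  rw [signedReversal, M12_signedPerm, M23_signedPerm]
  exact signedPerm_commute (fun x => by simp) (fun x => by simp [hl, hr, mul_comm])

end SignedReversal

-- `1 : Fin 3` is the middle basis index, the fixed point of `Fin.rev`.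
def braidSign (ea eb ec : ℝ) (i j : Fin 3) : ℝ :=
  if i = 1 then (if j = 1 then 1 else ec) else (if j = 1 then eb else ea)

theorem braidSign_rev_left (ea eb ec : ℝ) (i j : Fin 3) :
    braidSign ea eb ec i.rev j = braidSign ea eb ec i j := by
  fin_cases i <;> rfl

theorem braidSign_rev_right (ea eb ec : ℝ) (i j : Fin 3) :
    braidSign ea eb ec i j.rev = braidSign ea eb ec i j := by
  fin_cases j <;> rfl

theorem braidSign_mul_self {ea eb ec : ℝ} (ha : ea * ea = 1) (hb : eb * eb = 1)
    (hc : ec * ec = 1) (i j : Fin 3) : braidSign ea eb ec i j * braidSign ea eb ec i j = 1 := by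
  unfold braidSign
  split_ifs <;> simp [*]

theorem RhatP_half_eq (ea eb ec : ℝ) :
    RhatP (1/2) (ea/2) (1/2) (eb/2) (1/2) (ec/2) =
      (2⁻¹ : ℝ) • (1 + signedReversal (braidSign ea eb ec)) := by
  ext ⟨i, j⟩ ⟨k, l⟩
  fin_cases i <;> fin_cases j <;> fin_cases k <;> fin_cases l <;>
    simp [RhatP, Rhat9, enc, signedReversal, signedPerm, braidSign, one_apply, Fin.rev] <;> ring

/-- For any choice of signs ε_a, ε_b, ε_c ∈ {+1,−1}, with a₊=b₊=c₊=1/2,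
a₋=ε_a/2, b₋=ε_b/2, c₋=ε_c/2, the matrix R̂ satisfies the constant braid equation. -/
theorem stmt1 (ea eb ec : ℝ) (ha : ea = 1 ∨ ea = -1) (hb : eb = 1 ∨ eb = -1)
    (hc : ec = 1 ∨ ec = -1) :
    M12 (RhatP (1/2) (ea/2) (1/2) (eb/2) (1/2) (ec/2)) *
      M23 (RhatP (1/2) (ea/2) (1/2) (eb/2) (1/2) (ec/2)) *
      M12 (RhatP (1/2) (ea/2) (1/2) (eb/2) (1/2) (ec/2)) =
    M23 (RhatP (1/2) (ea/2) (1/2) (eb/2) (1/2) (ec/2)) *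
      M12 (RhatP (1/2) (ea/2) (1/2) (eb/2) (1/2) (ec/2)) *
      M23 (RhatP (1/2) (ea/2) (1/2) (eb/2) (1/2) (ec/2)) := by
  have hsign : ∀ e : ℝ, e = 1 ∨ e = -1 → e * e = 1 := by rintro e (rfl | rfl) <;> norm_num
  have hl := braidSign_rev_left ea eb ec
  have hr := braidSign_rev_right ea eb ec
  have hsq := braidSign_mul_self (hsign ea ha) (hsign eb hb) (hsign ec hc)
  rw [RhatP_half_eq, M12_smul_one_add, M23_smul_one_add]
  exact half_smul_one_add_braid_of_commute (M12_signedReversal_mul_self hl hr hsq)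
    (M23_signedReversal_mul_self hl hr hsq) (commute_M12_M23_signedReversal hl hr)
end

section
/- For real parameters θ, m₁₁±, m₂₁±, m₂₂±, define a₊=(e^{m₁₁⁺θ}+e^{m₁₁⁻θ})/2, a₋=(e^{m₁₁⁺θ}−e^{m₁₁⁻θ})/2, and similarly b±, c± from m₂₁±, m₂₂±. Then the matrix R̂(θ) satisfies the baxterized braid equation R̂₁₂(θ) R̂₂₃(θ+θ′) R̂₁₂(θ′) = R̂₂₃(θ′) R̂₁₂(θ+θ′) R̂₂₃(θ) for all real θ, θ′, where R̂₁₂(θ)=R̂(θ)⊗I₃ and R̂₂₃(θ)=I₃⊗R̂(θ). -/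
open Matrix

/-- `a₊(θ) = (e^{m⁺θ} + e^{m⁻θ})/2`. -/
noncomputable def aP (mp mm θ : ℝ) : ℝ := (Real.exp (mp * θ) + Real.exp (mm * θ)) / 2

/-- `a₋(θ) = (e^{m⁺θ} − e^{m⁻θ})/2`. -/
noncomputable def aM (mp mm θ : ℝ) : ℝ := (Real.exp (mp * θ) - Real.exp (mm * θ)) / 2

/-- The baxterized braid matrix `R̂(θ)` built from the parameters `m₁₁±, m₂₁±, m₂₂±`. -/
noncomputable def RhatTheta (m11p m11m m21p m21m m22p m22m θ : ℝ) :
    Matrix (Fin 3 × Fin 3) (Fin 3 × Fin 3) ℝ :=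
  RhatP (aP m11p m11m θ) (aM m11p m11m θ) (aP m21p m21m θ) (aM m21p m21m θ)
    (aP m22p m22m θ) (aM m22p m22m θ)

/-! Every factor of `R̂(θ) = a₊ E⊗E + a₋ F⊗F + b₊ E⊗M + b₋ F⊗M + c₊ M⊗E + c₋ M⊗F + M⊗M`, with
`E = diag(1,0,1)`, `F` the flip `e₀ ↔ e₂` and `M = diag(0,1,0)`, lies in the commutative algebra
spanned by `E, F, M`. Hence `R̂₁₂(θ)` and `R̂₂₃(θ')` commute for all `θ, θ'`. Moreover the addition
formulas `a₊(θ+θ') = a₊(θ)a₊(θ') + a₋(θ)a₋(θ')`, `a₋(θ+θ') = a₊(θ)a₋(θ') + a₋(θ)a₊(θ')` make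
`θ ↦ R̂(θ)` a one-parameter group, so both sides of the braid equation equal
`R̂₁₂(θ+θ') R̂₂₃(θ+θ')`. -/

open scoped Kronecker
open Submodule

section TensorEmbeddings

variable (A B : Matrix (Fin 3 × Fin 3) (Fin 3 × Fin 3) ℝ)

lemma M12_zero : M12 0 = 0 := by
  ext; simp [M12]

lemma M12_add : M12 (A + B) = M12 A + M12 B := by
  ext; simp only [M12, Matrix.add_apply, add_mul]

lemma M12_smul (c : ℝ) : M12 (c • A) = c • M12 A := by
  ext; simp [M12]

lemma M12_mul : M12 (A * B) = M12 A * M12 B := by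
  ext; simp [M12, Matrix.mul_apply, Fintype.sum_prod_type]

lemma M12_kronecker (X Y : Matrix (Fin 3) (Fin 3) ℝ) : M12 (X ⊗ₖ Y) = X ⊗ₖ (Y ⊗ₖ 1) := by
  ext; simp [M12, Matrix.one_apply]

lemma M23_eq_one_kronecker : M23 A = 1 ⊗ₖ A := by
  ext; simp [M23, Matrix.one_apply]

lemma M23_zero : M23 0 = 0 := by
  ext; simp [M23]

lemma M23_add : M23 (A + B) = M23 A + M23 B := by
  ext; simp [M23, mul_add]

lemma M23_smul (c : ℝ) : M23 (c • A) = c • M23 A := by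
  ext; simp [M23, mul_left_comm]

lemma M23_mul : M23 (A * B) = M23 A * M23 B := by
  simp only [M23_eq_one_kronecker, ← Matrix.mul_kronecker_mul, mul_one]

end TensorEmbeddings

lemma commute_M12_kronecker_M23_kronecker {X Y Z W : Matrix (Fin 3) (Fin 3) ℝ}
    (h : Commute Y Z) : Commute (M12 (X ⊗ₖ Y)) (M23 (Z ⊗ₖ W)) := by
  simp only [Commute, SemiconjBy, M12_kronecker, M23_eq_one_kronecker,
    ← Matrix.mul_kronecker_mul, mul_one, one_mul, h.eq]

lemma commute_M12_M23_of_mem_span {r s t u : Set (Matrix (Fin 3) (Fin 3) ℝ)}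
    (hst : ∀ Y ∈ s, ∀ Z ∈ t, Commute Y Z) {A B : Matrix (Fin 3 × Fin 3) (Fin 3 × Fin 3) ℝ}
    (hA : A ∈ span ℝ (Set.image2 (· ⊗ₖ ·) r s)) (hB : B ∈ span ℝ (Set.image2 (· ⊗ₖ ·) t u)) :
    Commute (M12 A) (M23 B) := by
  induction hA using span_induction with
  | mem _ hA =>
    obtain ⟨X, -, Y, hY, rfl⟩ := hA
    induction hB using span_induction with
    | mem _ hB =>
      obtain ⟨Z, hZ, W, -, rfl⟩ := hB
      exact commute_M12_kronecker_M23_kronecker (hst Y hY Z hZ)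
    | zero => rw [M23_zero]; exact Commute.zero_right _
    | add _ _ _ _ h h' => rw [M23_add]; exact h.add_right h'
    | smul c _ _ h => rw [M23_smul]; exact h.smul_right c
  | zero => rw [M12_zero]; exact Commute.zero_left _
  | add _ _ _ _ h h' => rw [M12_add]; exact h.add_left h'
  | smul c _ _ h => rw [M12_smul]; exact h.smul_left c

def flipSym (u v w : ℝ) : Matrix (Fin 3) (Fin 3) ℝ :=
  !![u, 0, v;
     0, w, 0;
     v, 0, u]

def flipSymSet : Set (Matrix (Fin 3) (Fin 3) ℝ) := {X | ∃ u v w, flipSym u v w = X}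

lemma flipSym_zero : flipSym 0 0 0 = 0 := by
  ext i j; fin_cases i <;> fin_cases j <;> rfl

lemma flipSym_mul (u v w u' v' w' : ℝ) :
    flipSym u v w * flipSym u' v' w' =
      flipSym (u * u' + v * v') (u * v' + v * u') (w * w') := by
  ext i j; fin_cases i <;> fin_cases j <;> simp [flipSym, Matrix.mul_apply, Fin.sum_univ_three] <;> ring

lemma commute_of_mem_flipSymSet {X Y : Matrix (Fin 3) (Fin 3) ℝ} :
    X ∈ flipSymSet → Y ∈ flipSymSet → Commute X Y := by
  rintro ⟨u, v, w, rfl⟩ ⟨u', v', w', rfl⟩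
  simp only [Commute, SemiconjBy, flipSym_mul]
  congr 1 <;> ring

lemma RhatP_eq_sum_kronecker (ap am bp bm cp cm : ℝ) : RhatP ap am bp bm cp cm =
    ap • (flipSym 1 0 0 ⊗ₖ flipSym 1 0 0) + am • (flipSym 0 1 0 ⊗ₖ flipSym 0 1 0) +
      bp • (flipSym 1 0 0 ⊗ₖ flipSym 0 0 1) + bm • (flipSym 0 1 0 ⊗ₖ flipSym 0 0 1) +
      cp • (flipSym 0 0 1 ⊗ₖ flipSym 1 0 0) + cm • (flipSym 0 0 1 ⊗ₖ flipSym 0 1 0) +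
      flipSym 0 0 1 ⊗ₖ flipSym 0 0 1 := by
  ext ⟨i, j⟩ ⟨k, l⟩
  fin_cases i <;> fin_cases j <;> fin_cases k <;> fin_cases l <;> simp [RhatP, Rhat9, enc, flipSym]

lemma RhatP_mem_span (ap am bp bm cp cm : ℝ) :
    RhatP ap am bp bm cp cm ∈ span ℝ (Set.image2 (· ⊗ₖ ·) flipSymSet flipSymSet) := by
  have hmem (u v w u' v' w' : ℝ) :
      flipSym u v w ⊗ₖ flipSym u' v' w' ∈ span ℝ (Set.image2 (· ⊗ₖ ·) flipSymSet flipSymSet) :=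
    subset_span (Set.mem_image2_of_mem ⟨u, v, w, rfl⟩ ⟨u', v', w', rfl⟩)
  rw [RhatP_eq_sum_kronecker]
  refine add_mem (add_mem (add_mem (add_mem (add_mem (add_mem ?_ ?_) ?_) ?_) ?_) ?_) (hmem _ _ _ _ _ _) <;>
    exact smul_mem _ _ (hmem _ _ _ _ _ _)

lemma RhatP_mul (a b c d e f a' b' c' d' e' f' : ℝ) :
    RhatP a b c d e f * RhatP a' b' c' d' e' f' =
      RhatP (a * a' + b * b') (a * b' + b * a') (c * c' + d * d') (c * d' + d * c')
        (e * e' + f * f') (e * f' + f * e') := by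
  simp only [RhatP_eq_sum_kronecker, add_mul, mul_add, smul_mul_assoc, mul_smul_comm,
    ← Matrix.mul_kronecker_mul, flipSym_mul]
  norm_num [flipSym_zero]
  module

lemma aP_add (mp mm θ θ' : ℝ) :
    aP mp mm (θ + θ') = aP mp mm θ * aP mp mm θ' + aM mp mm θ * aM mp mm θ' := by
  simp only [aP, aM, mul_add, Real.exp_add]; ring

lemma aM_add (mp mm θ θ' : ℝ) :
    aM mp mm (θ + θ') = aP mp mm θ * aM mp mm θ' + aM mp mm θ * aP mp mm θ' := by
  simp only [aP, aM, mul_add, Real.exp_add]; ring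

lemma RhatTheta_add (m11p m11m m21p m21m m22p m22m θ θ' : ℝ) :
    RhatTheta m11p m11m m21p m21m m22p m22m (θ + θ') =
      RhatTheta m11p m11m m21p m21m m22p m22m θ * RhatTheta m11p m11m m21p m21m m22p m22m θ' := by
  simp only [RhatTheta, RhatP_mul, aP_add, aM_add]


/-- The baxterized braid equation
`R̂₁₂(θ) R̂₂₃(θ+θ′) R̂₁₂(θ′) = R̂₂₃(θ′) R̂₁₂(θ+θ′) R̂₂₃(θ)`. -/
theorem stmt2 (m11p m11m m21p m21m m22p m22m : ℝ) (θ θ' : ℝ) :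
    M12 (RhatTheta m11p m11m m21p m21m m22p m22m θ) *
      M23 (RhatTheta m11p m11m m21p m21m m22p m22m (θ + θ')) *
      M12 (RhatTheta m11p m11m m21p m21m m22p m22m θ') =
    M23 (RhatTheta m11p m11m m21p m21m m22p m22m θ') *
      M12 (RhatTheta m11p m11m m21p m21m m22p m22m (θ + θ')) *
      M23 (RhatTheta m11p m11m m21p m21m m22p m22m θ) := by
  set R := RhatTheta m11p m11m m21p m21m m22p m22m
  have hadd (s t : ℝ) : R (s + t) = R s * R t := RhatTheta_add ..
  have hcomm (s t : ℝ) : Commute (M12 (R s)) (M23 (R t)) :=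
    commute_M12_M23_of_mem_span (fun _ hY _ hZ => commute_of_mem_flipSymSet hY hZ)
      (RhatP_mem_span _ _ _ _ _ _) (RhatP_mem_span _ _ _ _ _ _)
  calc M12 (R θ) * M23 (R (θ + θ')) * M12 (R θ')
      = M12 (R (θ + θ')) * M23 (R (θ + θ')) := by
        rw [mul_assoc, ← (hcomm θ' _).eq, ← mul_assoc, ← M12_mul, hadd]
    _ = M23 (R θ') * M12 (R (θ + θ')) * M23 (R θ) := by
        rw [← (hcomm _ θ').eq, mul_assoc, ← M23_mul, ← hadd, add_comm θ']
end

section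
/- Let A be an associative unital ℝ-algebra and T a 3×3 matrix with entries k,p,l;q,r,s;m,t,n in A. Suppose R T₁ T₂ = T₂ T₁ R where R is the constant 9×9 R-matrix with a₊=b₊=c₊=a₋=b₋=c₋=1/2 (case (+,+,+)), T₁=T⊗I₃, T₂=I₃⊗T (as 9×9 matrices over A). Then k² = n², kn = nk, l² = m², lm = ml, km = nl, kl = nm, lk = mn, mk = ln, r(k−n) = (k−n)r = 0, and r(l−m) = (l−m)r = 0. -/
open Matrix

/-- The flip permutation `P(e_i ⊗ e_j) = e_j ⊗ e_i`. -/
def Pflip : Matrix (Fin 3 × Fin 3) (Fin 3 × Fin 3) ℝ :=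
  fun p q => if p.1 = q.2 ∧ p.2 = q.1 then 1 else 0

/-- The constant R-matrix `R = P·R̂`, with entries viewed in the ℝ-algebra `A`. -/
noncomputable def RmatA (A : Type*) [Ring A] [Algebra ℝ A] (ap am bp bm cp cm : ℝ) :
    Matrix (Fin 3 × Fin 3) (Fin 3 × Fin 3) A :=
  (Pflip * RhatP ap am bp bm cp cm).map (algebraMap ℝ A)

/-- `T₁ = T ⊗ I₃` over the algebra `A`. -/
def T1 {A : Type*} [Ring A] (T : Matrix (Fin 3) (Fin 3) A) :
    Matrix (Fin 3 × Fin 3) (Fin 3 × Fin 3) A :=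
  fun x y => if x.2 = y.2 then T x.1 y.1 else 0

/-- `T₂ = I₃ ⊗ T` over the algebra `A`. -/
def T2 {A : Type*} [Ring A] (T : Matrix (Fin 3) (Fin 3) A) :
    Matrix (Fin 3 × Fin 3) (Fin 3 × Fin 3) A :=
  fun x y => if x.1 = y.1 then T x.2 y.2 else 0

/-!
With all parameters equal to `1/2`, the braid matrix is `R̂ = ½ (I + S)`, where `S` permutes the
basis by the point reflection `(i, j) ↦ (2 - i, 2 - j)` (its fixed point `(1, 1)` accounts for the
central entry `1`). In the `((j, i), (c, d))` entry of `R T₁ T₂ = T₂ T₁ R` the identity part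
contributes `T i c * T j d` to both sides, and what remains is
`T (2 - i) c * T (2 - j) d = T i (2 - c) * T j (2 - d)`. Every listed relation is one instance of it.
-/

lemma RhatP_half_apply (u v : Fin 3 × Fin 3) :
    RhatP (1/2) (1/2) (1/2) (1/2) (1/2) (1/2) u v =
      2⁻¹ * ((if u = v then 1 else 0) + if Prod.map Fin.rev Fin.rev u = v then 1 else 0) := by
  obtain ⟨i, j⟩ := u
  obtain ⟨c, d⟩ := v
  fin_cases i <;> fin_cases j <;> fin_cases c <;> fin_cases d <;>
    norm_num [RhatP, Rhat9, enc, Prod.ext_iff, Fin.ext_iff, Fin.val_rev]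

lemma Pflip_mul_apply (M : Matrix (Fin 3 × Fin 3) (Fin 3 × Fin 3) ℝ) (x y : Fin 3 × Fin 3) :
    (Pflip * M) x y = M x.swap y := by
  simp [Pflip, mul_apply, ite_and, Fintype.sum_prod_type, Prod.swap]

lemma map_rev_swap_eq_iff {x y : Fin 3 × Fin 3} :
    Prod.map Fin.rev Fin.rev x.swap = y ↔ x = (Prod.map Fin.rev Fin.rev y).swap := by
  constructor <;> rintro rfl <;> ext <;> simp

lemma RmatA_half_apply {A : Type*} [Ring A] [Algebra ℝ A] (x y : Fin 3 × Fin 3) :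
    RmatA A (1/2) (1/2) (1/2) (1/2) (1/2) (1/2) x y =
      (2⁻¹ : ℝ) • ((if x.swap = y then 1 else 0) +
        if Prod.map Fin.rev Fin.rev x.swap = y then 1 else 0) := by
  rw [RmatA, map_apply, Pflip_mul_apply, RhatP_half_apply, map_mul, Algebra.smul_def]
  simp only [map_add, apply_ite (algebraMap ℝ A), map_one, map_zero]

lemma RmatA_half_mul_apply {A : Type*} [Ring A] [Algebra ℝ A]
    (M : Matrix (Fin 3 × Fin 3) (Fin 3 × Fin 3) A) (x y : Fin 3 × Fin 3) :
    (RmatA A (1/2) (1/2) (1/2) (1/2) (1/2) (1/2) * M) x y =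
      (2⁻¹ : ℝ) • (M x.swap y + M (Prod.map Fin.rev Fin.rev x.swap) y) := by
  simp only [mul_apply, RmatA_half_apply]
  simp [add_mul, ite_mul, Finset.sum_add_distrib]

lemma mul_RmatA_half_apply {A : Type*} [Ring A] [Algebra ℝ A]
    (M : Matrix (Fin 3 × Fin 3) (Fin 3 × Fin 3) A) (x y : Fin 3 × Fin 3) :
    (M * RmatA A (1/2) (1/2) (1/2) (1/2) (1/2) (1/2)) x y =
      (2⁻¹ : ℝ) • (M x y.swap + M x (Prod.map Fin.rev Fin.rev y).swap) := by
  simp only [mul_apply, RmatA_half_apply, Prod.swap_eq_iff_eq_swap, map_rev_swap_eq_iff]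
  simp [mul_add, mul_ite, Finset.sum_add_distrib]

lemma T1_mul_T2_apply {A : Type*} [Ring A] (T : Matrix (Fin 3) (Fin 3) A) (a b c d : Fin 3) :
    (T1 T * T2 T) (a, b) (c, d) = T a c * T b d := by
  simp [T1, T2, mul_apply, Fintype.sum_prod_type, ite_mul, mul_ite]

lemma T2_mul_T1_apply {A : Type*} [Ring A] (T : Matrix (Fin 3) (Fin 3) A) (a b c d : Fin 3) :
    (T2 T * T1 T) (a, b) (c, d) = T b d * T a c := by
  simp [T1, T2, mul_apply, Fintype.sum_prod_type, ite_mul, mul_ite]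

lemma rev_mul_rev_eq_of_rtt {A : Type*} [Ring A] [Algebra ℝ A] {T : Matrix (Fin 3) (Fin 3) A}
    (h : RmatA A (1/2) (1/2) (1/2) (1/2) (1/2) (1/2) * T1 T * T2 T =
      T2 T * T1 T * RmatA A (1/2) (1/2) (1/2) (1/2) (1/2) (1/2)) (i j c d : Fin 3) :
    T i.rev c * T j.rev d = T i c.rev * T j d.rev := by
  have hji := congr_fun (congr_fun h (j, i)) (c, d)
  rw [Matrix.mul_assoc, RmatA_half_mul_apply, mul_RmatA_half_apply] at hji
  simp only [Prod.swap_prod_mk, Prod.map_apply, T1_mul_T2_apply, T2_mul_T1_apply] at hji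
  exact add_left_cancel (smul_right_injective A (by norm_num : (2⁻¹ : ℝ) ≠ 0) hji)

/-- RTT relations in the case (+,+,+) imply the relation set (N). -/
theorem stmt6 {A : Type*} [Ring A] [Algebra ℝ A] (k p l q r s m t n : A)
    (hRTT : RmatA A (1/2) (1/2) (1/2) (1/2) (1/2) (1/2) *
        T1 !![k,p,l;q,r,s;m,t,n] * T2 !![k,p,l;q,r,s;m,t,n] =
      T2 !![k,p,l;q,r,s;m,t,n] * T1 !![k,p,l;q,r,s;m,t,n] *
        RmatA A (1/2) (1/2) (1/2) (1/2) (1/2) (1/2)) :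
    k * k = n * n ∧ k * n = n * k ∧ l * l = m * m ∧ l * m = m * l ∧
    k * m = n * l ∧ k * l = n * m ∧ l * k = m * n ∧ m * k = l * n ∧
    r * (k - n) = 0 ∧ (k - n) * r = 0 ∧ r * (l - m) = 0 ∧ (l - m) * r = 0 := by
  have key := rev_mul_rev_eq_of_rtt hRTT
  simp only [mul_sub, sub_mul, sub_eq_zero]
  exact ⟨by simpa using key 2 2 0 0, by simpa using key 2 0 0 2, by simpa using key 2 2 2 2,
    by simpa using key 2 0 2 0, by simpa using key 2 0 0 0, by simpa using key 2 2 0 2,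
    by simpa using key 2 2 2 0, by simpa using key 0 2 0 0, by simpa using key 1 2 1 0,
    by simpa using key 2 1 0 1, by simpa using key 1 2 1 2, by simpa using key 2 1 2 1⟩
end

section
/- Under the RTT relations with the constant R-matrix in the case a₊=a₋ (with b₊=±b₋, c₊=±c₋ arbitrary among the allowed constant solutions), the generators satisfy p² = t², pt = tp, q² = s², and qs = sq. Equivalently, in terms of p̃=(p+t)/2, t̃=(p−t)/2, q̃=(q+s)/2, s̃=(q−s)/2, one has p̃t̃ = t̃p̃ = 0 and q̃s̃ = s̃q̃ = 0. -/
open Matrix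

/-
The proof needs only four entries of `R T₁ T₂ = T₂ T₁ R`: the rows `(0,0)`, `(0,2)` and the
columns `(0,0)`, `(0,2)` of `R = P·R̂` have the two nonzero entries `a₊, a₋`, while its row and
column `(1,1)` are those of the identity. Hence, e.g., the `((0,0),(1,1))` entry reads
`a₊ p² + a₋ t² = p²`, which for `a₊ + a₋ = 1`, `a₋ ≠ 0` forces `p² = t²`. The statements about
`p̃, t̃, q̃, s̃` follow since `(p + t)(p - t) = p² - t²` once `p` and `t` commute.
-/

theorem eq_of_smul_add_smul_eq {K M : Type*} [Field K] [AddCommGroup M] [Module K M]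
    {a b : K} {x y : M} (hab : a + b = 1) (hb : b ≠ 0) (h : a • x + b • y = x) : x = y := by
  obtain rfl : a = 1 - b := eq_sub_of_add_eq hab
  have hbyx : b • (y - x) = 0 := by linear_combination (norm := module) h
  exact (sub_eq_zero.mp ((smul_eq_zero.mp hbyx).resolve_left hb)).symm

theorem smul_add_mul_smul_sub_eq_zero {R A : Type*} [CommSemiring R] [Ring A] [Algebra R A]
    (c d : R) {x y : A} (hsq : x * x = y * y) (hxy : Commute x y) :
    (c • (x + y)) * (d • (x - y)) = 0 ∧ (c • (x - y)) * (d • (x + y)) = 0 := by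
  simp only [smul_mul_smul, ← hxy.mul_self_sub_mul_self_eq, ← hxy.mul_self_sub_mul_self_eq',
    hsq, sub_self, smul_zero, and_self]

section TensorLegs

variable {A : Type*} [Ring A]

theorem T1_mul_T2_apply_s7 (T : Matrix (Fin 3) (Fin 3) A) (x y : Fin 3 × Fin 3) :
    (T1 T * T2 T) x y = T x.1 y.1 * T x.2 y.2 := by
  simp [T1, T2, Matrix.mul_apply, Fintype.sum_prod_type]

theorem T2_mul_T1_apply_s7 (T : Matrix (Fin 3) (Fin 3) A) (x y : Fin 3 × Fin 3) :
    (T2 T * T1 T) x y = T x.2 y.2 * T x.1 y.1 := by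
  simp [T1, T2, Matrix.mul_apply, Fintype.sum_prod_type]

theorem sum_mul_eq_sum_mul_of_rtt {R : Matrix (Fin 3 × Fin 3) (Fin 3 × Fin 3) A}
    {T : Matrix (Fin 3) (Fin 3) A}
    (h : R * T1 T * T2 T = T2 T * T1 T * R) (x y : Fin 3 × Fin 3) :
    ∑ z, R x z * (T z.1 y.1 * T z.2 y.2) = ∑ w, T x.2 w.2 * T x.1 w.1 * R w y := by
  have hxy := congrFun (congrFun h x) y
  rw [Matrix.mul_assoc, Matrix.mul_apply, Matrix.mul_apply] at hxy
  simpa only [T1_mul_T2_apply_s7, T2_mul_T1_apply_s7] using hxy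

end TensorLegs

section ExoticR

variable {A : Type*} [Ring A] [Algebra ℝ A] {ap am bp bm cp cm : ℝ}

theorem RmatA_apply (x y : Fin 3 × Fin 3) :
    RmatA A ap am bp bm cp cm x y = algebraMap ℝ A (RhatP ap am bp bm cp cm x.swap y) := by
  rw [RmatA, Matrix.map_apply, Matrix.mul_apply, Fintype.sum_eq_single x.swap]
  · simp [Pflip]
  · intro z hz
    simp only [Pflip, ite_mul, one_mul, zero_mul, ite_eq_right_iff]
    rintro ⟨h1, h2⟩
    exact absurd (Prod.ext h2.symm h1.symm) hz

theorem rtt_RmatA_entries {T : Matrix (Fin 3) (Fin 3) A}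
    (h : RmatA A ap am bp bm cp cm * T1 T * T2 T = T2 T * T1 T * RmatA A ap am bp bm cp cm) :
    ap • (T 0 1 * T 0 1) + am • (T 2 1 * T 2 1) = T 0 1 * T 0 1 ∧
    ap • (T 2 1 * T 0 1) + am • (T 0 1 * T 2 1) = T 2 1 * T 0 1 ∧
    ap • (T 1 0 * T 1 0) + am • (T 1 2 * T 1 2) = T 1 0 * T 1 0 ∧
    ap • (T 1 0 * T 1 2) + am • (T 1 2 * T 1 0) = T 1 0 * T 1 2 := by
  have entry := sum_mul_eq_sum_mul_of_rtt h
  simp only [RmatA_apply, Fintype.sum_prod_type, Fin.sum_univ_three, RhatP, Rhat9, enc,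
    Algebra.algebraMap_eq_smul_one, smul_mul_assoc, mul_smul_comm, one_mul, mul_one] at entry
  refine ⟨?_, ?_, ?_, ?_⟩
  · simpa using entry (0, 0) (1, 1)
  · simpa [add_comm] using entry (0, 2) (1, 1)
  · simpa using (entry (1, 1) (0, 0)).symm
  · simpa [add_comm] using (entry (1, 1) (0, 2)).symm

theorem rtt_RmatA_relations {T : Matrix (Fin 3) (Fin 3) A} (hsum : ap + am = 1) (ham : am ≠ 0)
    (h : RmatA A ap am bp bm cp cm * T1 T * T2 T = T2 T * T1 T * RmatA A ap am bp bm cp cm) :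
    T 0 1 * T 0 1 = T 2 1 * T 2 1 ∧ T 0 1 * T 2 1 = T 2 1 * T 0 1 ∧
    T 1 0 * T 1 0 = T 1 2 * T 1 2 ∧ T 1 0 * T 1 2 = T 1 2 * T 1 0 := by
  obtain ⟨h₁, h₂, h₃, h₄⟩ := rtt_RmatA_entries h
  exact ⟨eq_of_smul_add_smul_eq hsum ham h₁, (eq_of_smul_add_smul_eq hsum ham h₂).symm,
    eq_of_smul_add_smul_eq hsum ham h₃, eq_of_smul_add_smul_eq hsum ham h₄⟩

end ExoticR

theorem stmt7_general {A : Type*} [Ring A] [Algebra ℝ A] (k p l q r s m t n : A)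
    (bm cm : ℝ)
    (hRTT : RmatA A (1/2) (1/2) (1/2) bm (1/2) cm *
        T1 !![k,p,l;q,r,s;m,t,n] * T2 !![k,p,l;q,r,s;m,t,n] =
      T2 !![k,p,l;q,r,s;m,t,n] * T1 !![k,p,l;q,r,s;m,t,n] *
        RmatA A (1/2) (1/2) (1/2) bm (1/2) cm) :
    (p * p = t * t ∧ p * t = t * p ∧ q * q = s * s ∧ q * s = s * q) ∧
    (((1/2 : ℝ) • (p + t)) * ((1/2 : ℝ) • (p - t)) = 0 ∧
     ((1/2 : ℝ) • (p - t)) * ((1/2 : ℝ) • (p + t)) = 0 ∧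
     ((1/2 : ℝ) • (q + s)) * ((1/2 : ℝ) • (q - s)) = 0 ∧
     ((1/2 : ℝ) • (q - s)) * ((1/2 : ℝ) • (q + s)) = 0) := by
  obtain ⟨hpp, hpt, hqq, hqs⟩ : p * p = t * t ∧ p * t = t * p ∧ q * q = s * s ∧ q * s = s * q :=
    rtt_RmatA_relations (by norm_num) (by norm_num) hRTT
  obtain ⟨hpt₁, hpt₂⟩ := smul_add_mul_smul_sub_eq_zero (1/2 : ℝ) (1/2 : ℝ) hpp hpt
  obtain ⟨hqs₁, hqs₂⟩ := smul_add_mul_smul_sub_eq_zero (1/2 : ℝ) (1/2 : ℝ) hqq hqs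
  exact ⟨⟨hpp, hpt, hqq, hqs⟩, hpt₁, hpt₂, hqs₁, hqs₂⟩

/-- RTT relations in the case `a₊ = a₋` (with `b₋, c₋ = ±1/2` arbitrary) imply
`p² = t²`, `pt = tp`, `q² = s²`, `qs = sq`; equivalently `p̃t̃ = t̃p̃ = 0` and
`q̃s̃ = s̃q̃ = 0` for `p̃=(p+t)/2`, `t̃=(p−t)/2`, `q̃=(q+s)/2`, `s̃=(q−s)/2`. -/
theorem stmt7 {A : Type*} [Ring A] [Algebra ℝ A] (k p l q r s m t n : A)
    (bm cm : ℝ) (hb : bm = 1/2 ∨ bm = -(1/2)) (hc : cm = 1/2 ∨ cm = -(1/2))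
    (hRTT : RmatA A (1/2) (1/2) (1/2) bm (1/2) cm *
        T1 !![k,p,l;q,r,s;m,t,n] * T2 !![k,p,l;q,r,s;m,t,n] =
      T2 !![k,p,l;q,r,s;m,t,n] * T1 !![k,p,l;q,r,s;m,t,n] *
        RmatA A (1/2) (1/2) (1/2) bm (1/2) cm) :
    (p * p = t * t ∧ p * t = t * p ∧ q * q = s * s ∧ q * s = s * q) ∧
    (((1/2 : ℝ) • (p + t)) * ((1/2 : ℝ) • (p - t)) = 0 ∧
     ((1/2 : ℝ) • (p - t)) * ((1/2 : ℝ) • (p + t)) = 0 ∧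
     ((1/2 : ℝ) • (q + s)) * ((1/2 : ℝ) • (q - s)) = 0 ∧
     ((1/2 : ℝ) • (q - s)) * ((1/2 : ℝ) • (q + s)) = 0) :=
  stmt7_general k p l q r s m t n bm cm hRTT
end
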